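/- Let f^G : {0,1}^n → ℝ≥0 admit a factorization f^G(x) = ∏_{i∈V} φ_i(x_i) · ∏_{α∈𝒜} ψ_α(x_α) over G = (V, 𝒜) in which every ψ_α is log-supermodular, and let f^H be the function associated to a permutation-encoded k-cover H of G. Then for all x^1,…,x^k ∈ {0,1}^n, f^H(x^1,…,x^k) ≤ ∏_{a=1}^k f^G(z^a(x^1,…,x^k)). -/
import Mathlib


open scoped NNReal

/-- `zvec x a` is the vector whose `j`-th component is the `(a+1)`-st largest (1-indexed)
among `x 0 j, …, x (k-1) j`; i.e. it is `true` iff at least `a+1` of these values are `true`. -/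
def zvec {k n : ℕ} (x : Fin k → Fin n → Bool) (a : Fin k) : Fin n → Bool :=
  fun j => decide ((a : ℕ) + 1 ≤ (Finset.univ.filter (fun b : Fin k => x b j = true)).card)

open Finset

/-- Pointwise description of a columnwise-sorted family. -/
lemma sorted_eq_decide {k : ℕ} {ι : Type*} [Fintype ι]
    (v : Fin k → ι → Bool)
    (hs : ∀ a b : Fin k, a < b → ∀ i, v a i = false → v b i ≠ true) :
    ∀ (a : Fin k) (i : ι),
      v a i = decide ((a : ℕ) + 1 ≤ (univ.filter (fun b : Fin k => v b i = true)).card) := by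
  intro a i
  by_cases hv : v a i = true
  · rw [hv]; symm
    rw [decide_eq_true_eq]
    have hsub : Finset.Iic a ⊆ univ.filter (fun b : Fin k => v b i = true) := by
      intro b hb
      simp only [Finset.mem_Iic] at hb
      simp only [mem_filter, mem_univ, true_and]
      rcases eq_or_lt_of_le hb with h | h
      · rwa [h]
      · by_contra hbf
        exact hs b a h i (by simpa using hbf) hv
    have := Finset.card_le_card hsub
    rwa [Fin.card_Iic] at this
  · have hvf : v a i = false := by simpa using hv
    rw [hvf]; symm
    rw [decide_eq_false_iff_not]
    intro hle
    have hsub : univ.filter (fun b : Fin k => v b i = true) ⊆ Finset.Iio a := by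
      intro b hb
      simp only [mem_filter, mem_univ, true_and] at hb
      simp only [Finset.mem_Iio]
      rcases lt_trichotomy b a with h | h | h
      · exact h
      · exact absurd (h ▸ hb) hv
      · exact absurd hb (hs a b h i hvf)
    have := Finset.card_le_card hsub
    rw [Fin.card_Iio] at this
    omega

/-- The key rearrangement lemma: for a log-supermodular `g`, the product
`∏ a, g (v a)` is at most the corresponding product over the columnwise-sorted family. -/
lemma sort_lemma {k : ℕ} {ι : Type*} [Fintype ι]
    (g : (ι → Bool) → ℝ≥0)
    (hg : ∀ u w : ι → Bool, g u * g w ≤ g (u ⊓ w) * g (u ⊔ w)) :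
    ∀ (N : ℕ) (v : Fin k → ι → Bool),
      (∑ c : Fin k, ∑ i : ι, (c : ℕ) * (if v c i = true then 1 else 0)) ≤ N →
      ∏ a : Fin k, g (v a) ≤
        ∏ a : Fin k, g (fun i =>
          decide ((a : ℕ) + 1 ≤ (univ.filter (fun b : Fin k => v b i = true)).card)) := by
  intro N
  induction N using Nat.strong_induction_on with
  | _ N ih =>
    intro v hΦ
    by_cases hsrt : ∃ a b : Fin k, a < b ∧ ∃ i, v a i = false ∧ v b i = true
    · obtain ⟨a, b, hab, i0, ha0, hb0⟩ := hsrt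
      have hne : a ≠ b := ne_of_lt hab
      set v' : Fin k → ι → Bool :=
        Function.update (Function.update v a (v a ⊔ v b)) b (v a ⊓ v b) with hv'def
      have hv'a : v' a = v a ⊔ v b := by
        simp [hv'def, Function.update_apply, hne, hne.symm]
      have hv'b : v' b = v a ⊓ v b := by
        simp [hv'def, Function.update_apply]
      have hv'c : ∀ c : Fin k, c ≠ a → c ≠ b → v' c = v c := by
        intro c hca hcb
        simp [hv'def, Function.update_apply, hca, hcb]
      have hbmem : b ∈ (univ : Finset (Fin k)).erase a := by
        simp [hne.symm]
      -- the "two entries swapped, rest equal" decompositions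
      have hMdec : ∀ (M : Type) [inst : CommMonoid M], ∀ (F : Fin k → M),
          ∏ c : Fin k, F c = F a * (F b * ∏ c ∈ ((univ : Finset (Fin k)).erase a).erase b, F c) := by
        intro M inst F
        rw [Finset.mul_prod_erase _ _ hbmem, Finset.mul_prod_erase _ _ (mem_univ a)]
      have hAdec : ∀ (F : Fin k → ℕ),
          ∑ c : Fin k, F c = F a + (F b + ∑ c ∈ ((univ : Finset (Fin k)).erase a).erase b, F c) := by
        intro F
        rw [Finset.add_sum_erase _ _ hbmem, Finset.add_sum_erase _ _ (mem_univ a)]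
      have hrest : ∀ c ∈ ((univ : Finset (Fin k)).erase a).erase b, v' c = v c := by
        intro c hc
        simp only [mem_erase] at hc
        exact hv'c c hc.2.1 hc.1
      -- counts are preserved
      have hcount : ∀ i : ι,
          (univ.filter (fun c : Fin k => v' c i = true)).card
            = (univ.filter (fun c : Fin k => v c i = true)).card := by
        intro i
        rw [Finset.card_filter, Finset.card_filter, hAdec, hAdec]
        have h1 : ∀ c ∈ ((univ : Finset (Fin k)).erase a).erase b,
            (if v' c i = true then 1 else 0) = (if v c i = true then 1 else 0) := by
          intro c hc; rw [hrest c hc]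
        rw [Finset.sum_congr rfl h1, hv'a, hv'b]
        cases hxa : v a i <;> cases hxb : v b i <;>
          simp [Pi.sup_apply, Pi.inf_apply, hxa, hxb]
      -- the potential strictly decreases
      have hpot : (∑ c : Fin k, ∑ i : ι, (c : ℕ) * (if v' c i = true then 1 else 0))
          < ∑ c : Fin k, ∑ i : ι, (c : ℕ) * (if v c i = true then 1 else 0) := by
        rw [hAdec, hAdec]
        have h1 : ∀ c ∈ ((univ : Finset (Fin k)).erase a).erase b,
            (∑ i : ι, (c : ℕ) * (if v' c i = true then 1 else 0))
              = ∑ i : ι, (c : ℕ) * (if v c i = true then 1 else 0) := by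
          intro c hc; rw [hrest c hc]
        rw [Finset.sum_congr rfl h1]
        have key : (∑ i : ι, (a : ℕ) * (if v' a i = true then 1 else 0))
              + (∑ i : ι, (b : ℕ) * (if v' b i = true then 1 else 0))
            < (∑ i : ι, (a : ℕ) * (if v a i = true then 1 else 0))
              + (∑ i : ι, (b : ℕ) * (if v b i = true then 1 else 0)) := by
          rw [← Finset.sum_add_distrib, ← Finset.sum_add_distrib]
          apply Finset.sum_lt_sum
          · intro i _
            rw [hv'a, hv'b]
            have hab' : (a : ℕ) ≤ (b : ℕ) := le_of_lt hab
            cases hxa : v a i <;> cases hxb : v b i <;>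
              simp [Pi.sup_apply, Pi.inf_apply, hxa, hxb] <;> omega
          · refine ⟨i0, mem_univ i0, ?_⟩
            rw [hv'a, hv'b]
            have hab' : (a : ℕ) < (b : ℕ) := hab
            simp [Pi.sup_apply, Pi.inf_apply, ha0, hb0]
            omega
        omega
      -- the product does not decrease
      have hprod : ∏ c : Fin k, g (v c) ≤ ∏ c : Fin k, g (v' c) := by
        rw [hMdec ℝ≥0 (fun c => g (v c)), hMdec ℝ≥0 (fun c => g (v' c))]
        have h1 : ∏ c ∈ ((univ : Finset (Fin k)).erase a).erase b, g (v' c)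
            = ∏ c ∈ ((univ : Finset (Fin k)).erase a).erase b, g (v c) := by
          apply Finset.prod_congr rfl
          intro c hc; rw [hrest c hc]
        rw [h1, ← mul_assoc, ← mul_assoc]
        apply mul_le_mul_left
        rw [hv'a, hv'b]
        calc g (v a) * g (v b) ≤ g (v a ⊓ v b) * g (v a ⊔ v b) := hg _ _
          _ = g (v a ⊔ v b) * g (v a ⊓ v b) := mul_comm _ _
      have hΦ' : (∑ c : Fin k, ∑ i : ι, (c : ℕ) * (if v' c i = true then 1 else 0)) <
          N := lt_of_lt_of_le hpot hΦ
      have := ih _ hΦ' v' le_rfl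
      have hsame : (∏ a : Fin k, g (fun i =>
            decide ((a : ℕ) + 1 ≤ (univ.filter (fun b : Fin k => v' b i = true)).card)))
          = ∏ a : Fin k, g (fun i =>
            decide ((a : ℕ) + 1 ≤ (univ.filter (fun b : Fin k => v b i = true)).card)) := by
        apply Finset.prod_congr rfl
        intro c _
        congr 1
        funext i
        rw [hcount i]
      calc ∏ c : Fin k, g (v c) ≤ ∏ c : Fin k, g (v' c) := hprod
        _ ≤ _ := hsame ▸ this
    · push_neg at hsrt
      have hpt := sorted_eq_decide v hsrt
      apply le_of_eq
      apply Finset.prod_congr rfl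
      intro c _
      congr 1
      funext i
      exact hpt c i

/-- If `f^G` admits a log-supermodular factorization over `G = (V, 𝒜)` and `f^H` is the
function associated to a permutation-encoded `k`-cover `H` of `G`, then for all
`x¹,…,xᵏ ∈ {0,1}ⁿ`, `f^H(x¹,…,xᵏ) ≤ ∏ₐ f^G(zᵃ(x¹,…,xᵏ))`. -/
theorem cover_le_prod_zvec {n k : ℕ} (hk : 1 ≤ k)
    (𝒜 : Finset (Finset (Fin n)))
    (h𝒜 : ∀ α ∈ 𝒜, α.Nonempty)
    (φ : Fin n → Bool → ℝ≥0)
    (ψ : (α : Finset (Fin n)) → ({ i // i ∈ α } → Bool) → ℝ≥0)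
    (hψ : ∀ α ∈ 𝒜, ∀ u v : { i // i ∈ α } → Bool,
      ψ α u * ψ α v ≤ ψ α (u ⊓ v) * ψ α (u ⊔ v))
    (fG : (Fin n → Bool) → ℝ≥0)
    (hfG : ∀ x : Fin n → Bool,
      fG x = (∏ i : Fin n, φ i (x i)) * ∏ α ∈ 𝒜, ψ α (fun i => x i.val))
    -- the `k`-cover is encoded by a permutation `σ α i` of `{1,…,k}` for each `α ∈ 𝒜`, `i ∈ α`
    (σ : (α : Finset (Fin n)) → { i // i ∈ α } → Equiv.Perm (Fin k))
    (fH : (Fin k → Fin n → Bool) → ℝ≥0)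
    (hfH : ∀ x : Fin k → Fin n → Bool,
      fH x = (∏ i : Fin n, ∏ a : Fin k, φ i (x a i)) *
        ∏ α ∈ 𝒜, ∏ a : Fin k, ψ α (fun i => x (σ α i a) i.val)) :
    ∀ x : Fin k → Fin n → Bool, fH x ≤ ∏ a : Fin k, fG (zvec x a) := by
  intro x
  rw [hfH]
  have hφpart : ∀ i : Fin n,
      ∏ a : Fin k, φ i (x a i) ≤ ∏ a : Fin k, φ i (zvec x a i) := by
    intro i
    have hg : ∀ u w : Unit → Bool,
        (fun u : Unit → Bool => φ i (u ())) u * (fun u : Unit → Bool => φ i (u ())) w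
          ≤ (fun u : Unit → Bool => φ i (u ())) (u ⊓ w)
            * (fun u : Unit → Bool => φ i (u ())) (u ⊔ w) := by
      intro u w
      simp only
      cases hu : u () <;> cases hw : w () <;>
        simp [Pi.inf_apply, Pi.sup_apply, hu, hw, mul_comm]
    have := sort_lemma (fun u : Unit → Bool => φ i (u ())) hg
      (∑ c : Fin k, ∑ _i : Unit, (c : ℕ) * (if x c i = true then 1 else 0))
      (fun a _ => x a i) le_rfl
    simpa [zvec] using this
  have hψpart : ∀ α ∈ 𝒜,
      ∏ a : Fin k, ψ α (fun i => x (σ α i a) i.val)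
        ≤ ∏ a : Fin k, ψ α (fun i => zvec x a i.val) := by
    intro α hα
    have := sort_lemma (ψ α) (hψ α hα)
      (∑ c : Fin k, ∑ i : {i // i ∈ α}, (c : ℕ)
        * (if x (σ α i c) i.val = true then 1 else 0))
      (fun a i => x (σ α i a) i.val) le_rfl
    have hcard : ∀ i : {i // i ∈ α},
        (univ.filter (fun b : Fin k => x (σ α i b) i.val = true)).card
          = (univ.filter (fun b : Fin k => x b i.val = true)).card := by
      intro i
      rw [Finset.card_filter, Finset.card_filter]
      exact Equiv.sum_comp (σ α i) (fun b => if x b i.val = true then 1 else 0)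
    calc ∏ a : Fin k, ψ α (fun i => x (σ α i a) i.val)
        ≤ ∏ a : Fin k, ψ α (fun i => decide ((a : ℕ) + 1
            ≤ (univ.filter (fun b : Fin k => x (σ α i b) i.val = true)).card)) := this
      _ = ∏ a : Fin k, ψ α (fun i => zvec x a i.val) := by
          apply Finset.prod_congr rfl
          intro a _
          congr 1
          funext i
          rw [zvec, hcard i]
  calc (∏ i : Fin n, ∏ a : Fin k, φ i (x a i)) *
        ∏ α ∈ 𝒜, ∏ a : Fin k, ψ α (fun i => x (σ α i a) i.val)
      ≤ (∏ i : Fin n, ∏ a : Fin k, φ i (zvec x a i)) *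
        ∏ α ∈ 𝒜, ∏ a : Fin k, ψ α (fun i => zvec x a i.val) := by
        exact mul_le_mul' (Finset.prod_le_prod' (fun i _ => hφpart i))
          (Finset.prod_le_prod' hψpart)
    _ = ∏ a : Fin k, fG (zvec x a) := by
        simp_rw [hfG]
        rw [Finset.prod_mul_distrib]
        congr 1
        · exact Finset.prod_comm
        · exact Finset.prod_comm
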